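/- arXiv:2204.01650 — 2 statements merged into one kernel-verified Lean document; each statement's English description precedes it below -/
import Mathlib

section
/- Let p ≥ 2 be an integer and C_p = (4p)^{2p−1}/((2p−1)!)² ∈ ℂ. The sequence (E², F², H³, W^{3p−1}, W^p·E − x₅², W^p·F − x₆², W^p·H − x₇², H² − C_p·W^{2p−1} − x₈²) is a regular sequence in the polynomial ring ℂ[E,F,H,W,x₅,x₆,x₇,x₈]; in particular the quotient R̃_p of ℂ[E,F,H,W,x₅,x₆,x₇,x₈] by the ideal generated by these eight elements is a complete intersection ring. -/
open MvPolynomial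

/-- The constant `C_p = (4p)^{2p-1} / ((2p-1)!)²`. -/
noncomputable def Cconst (p : ℕ) : ℂ :=
  (4 * p : ℂ) ^ (2 * p - 1) / ((2 * p - 1).factorial : ℂ) ^ 2

/-- The variables `E, F, H, W, x₅, x₆, x₇, x₈` of `ℂ[E,F,H,W,x₅,x₆,x₇,x₈]`. -/
noncomputable def Evar : MvPolynomial (Fin 8) ℂ := X 0
noncomputable def Fvar : MvPolynomial (Fin 8) ℂ := X 1
noncomputable def Hvar : MvPolynomial (Fin 8) ℂ := X 2
noncomputable def Wvar : MvPolynomial (Fin 8) ℂ := X 3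
noncomputable def x5var : MvPolynomial (Fin 8) ℂ := X 4
noncomputable def x6var : MvPolynomial (Fin 8) ℂ := X 5
noncomputable def x7var : MvPolynomial (Fin 8) ℂ := X 6
noncomputable def x8var : MvPolynomial (Fin 8) ℂ := X 7

namespace Stmt10Aux

/-- Auxiliary: membership in `J.map C` via mapping to the quotient. -/
lemma mem_mapC {R : Type*} [CommRing R] (J : Ideal R) (w : Polynomial R) :
    w ∈ J.map (Polynomial.C : R →+* Polynomial R) ↔
      w.map (Ideal.Quotient.mk J) = 0 := by
  rw [Ideal.mem_map_C_iff, Polynomial.ext_iff]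
  simp [Polynomial.coeff_map, Ideal.Quotient.eq_zero_iff_mem]

/-- Auxiliary: a polynomial `X^d - C c` is a nonzerodivisor mod `J.map C`. -/
lemma poly_step {R : Type*} [CommRing R] (J : Ideal R) (c : R) (d : ℕ) (hd : d ≠ 0)
    (z : Polynomial R)
    (h : (Polynomial.X ^ d - Polynomial.C c) * z ∈ J.map (Polynomial.C : R →+* Polynomial R)) :
    z ∈ J.map (Polynomial.C : R →+* Polynomial R) := by
  rw [mem_mapC] at h ⊢
  rw [Polynomial.map_mul, Polynomial.map_sub, Polynomial.map_pow, Polynomial.map_X,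
    Polynomial.map_C] at h
  exact ((Polynomial.monic_X_pow_sub_C _ hd).mul_right_eq_zero_iff).mp h

/-- Auxiliary: converting a "nonzerodivisor mod ideal" statement to `IsSMulRegular`. -/
lemma smul_top_eq {R : Type*} [CommRing R] (I : Ideal R) :
    (I • ⊤ : Submodule R R) = I := by
  apply le_antisymm
  · exact Submodule.smul_le.mpr fun r hr m _ => by
      simpa [smul_eq_mul] using I.mul_mem_right m hr
  · intro x hx
    simpa using Submodule.smul_mem_smul hx (Submodule.mem_top (x := (1 : R)))

lemma reg_of {R : Type*} [CommRing R] (I : Ideal R) (f : R)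
    (h : ∀ z, f * z ∈ I → z ∈ I) :
    IsSMulRegular (R ⧸ (I • ⊤ : Submodule R R)) f := by
  intro a b hab
  obtain ⟨x, rfl⟩ := Submodule.Quotient.mk_surjective _ a
  obtain ⟨y, rfl⟩ := Submodule.Quotient.mk_surjective _ b
  change f • Submodule.Quotient.mk x = f • Submodule.Quotient.mk y at hab
  rw [← Submodule.Quotient.mk_smul, ← Submodule.Quotient.mk_smul,
    Submodule.Quotient.eq, smul_top_eq] at hab
  rw [Submodule.Quotient.eq, smul_top_eq]
  have : f * (x - y) ∈ I := by
    have : f • x - f • y = f * (x - y) := by simp [smul_eq_mul]; ring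
    rwa [this] at hab
  exact h _ this

/-- The variable-moving ring isomorphism. -/
noncomputable def ev (v : Fin 8) :
    MvPolynomial (Fin 8) ℂ ≃+* Polynomial (MvPolynomial (Fin 7) ℂ) :=
  ((renameEquiv ℂ (Equiv.swap 0 v)).trans (MvPolynomial.finSuccEquiv ℂ 7)).toRingEquiv

lemma ev_X (v j : Fin 8) :
    ev v (X j) = MvPolynomial.finSuccEquiv ℂ 7 (X (Equiv.swap 0 v j)) := by
  simp [ev, renameEquiv_apply, rename_X]

lemma ev_C (v : Fin 8) (a : ℂ) :
    ev v (MvPolynomial.C a) = Polynomial.C (MvPolynomial.C a) := by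
  have h := ((renameEquiv ℂ (Equiv.swap 0 v)).trans (MvPolynomial.finSuccEquiv ℂ 7)).commutes a
  have : ev v (MvPolynomial.C a)
      = algebraMap ℂ (Polynomial (MvPolynomial (Fin 7) ℂ)) a := by
    simpa [ev, algebraMap_eq] using h
  rw [this]
  simp [Polynomial.algebraMap_apply, algebraMap_eq]

lemma fse0 : MvPolynomial.finSuccEquiv ℂ 7 (X (0 : Fin 8)) = Polynomial.X :=
  finSuccEquiv_X_zero
lemma fse1 : MvPolynomial.finSuccEquiv ℂ 7 (X (1 : Fin 8)) = Polynomial.C (X (0 : Fin 7)) := by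
  have : (1 : Fin 8) = Fin.succ 0 := rfl
  rw [this, finSuccEquiv_X_succ]
lemma fse2 : MvPolynomial.finSuccEquiv ℂ 7 (X (2 : Fin 8)) = Polynomial.C (X (1 : Fin 7)) := by
  have : (2 : Fin 8) = Fin.succ 1 := rfl
  rw [this, finSuccEquiv_X_succ]
lemma fse3 : MvPolynomial.finSuccEquiv ℂ 7 (X (3 : Fin 8)) = Polynomial.C (X (2 : Fin 7)) := by
  have : (3 : Fin 8) = Fin.succ 2 := rfl
  rw [this, finSuccEquiv_X_succ]
lemma fse4 : MvPolynomial.finSuccEquiv ℂ 7 (X (4 : Fin 8)) = Polynomial.C (X (3 : Fin 7)) := by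
  have : (4 : Fin 8) = Fin.succ 3 := rfl
  rw [this, finSuccEquiv_X_succ]
lemma fse5 : MvPolynomial.finSuccEquiv ℂ 7 (X (5 : Fin 8)) = Polynomial.C (X (4 : Fin 7)) := by
  have : (5 : Fin 8) = Fin.succ 4 := rfl
  rw [this, finSuccEquiv_X_succ]
lemma fse6 : MvPolynomial.finSuccEquiv ℂ 7 (X (6 : Fin 8)) = Polynomial.C (X (5 : Fin 7)) := by
  have : (6 : Fin 8) = Fin.succ 5 := rfl
  rw [this, finSuccEquiv_X_succ]
lemma fse7 : MvPolynomial.finSuccEquiv ℂ 7 (X (7 : Fin 8)) = Polynomial.C (X (6 : Fin 7)) := by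
  have : (7 : Fin 8) = Fin.succ 6 := rfl
  rw [this, finSuccEquiv_X_succ]

/-- The main step lemma. -/
lemma step (e : MvPolynomial (Fin 8) ℂ ≃+* Polynomial (MvPolynomial (Fin 7) ℂ))
    (f : MvPolynomial (Fin 8) ℂ) (gens : List (MvPolynomial (Fin 8) ℂ))
    (c : MvPolynomial (Fin 7) ℂ) (d : ℕ) (hd : d ≠ 0)
    (hf : e f = Polynomial.X ^ d - Polynomial.C c ∨
          e f = Polynomial.C c - Polynomial.X ^ d)
    (hg : ∀ g ∈ gens, ∃ h, e g = Polynomial.C h)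
    (z : MvPolynomial (Fin 8) ℂ) (hz : f * z ∈ Ideal.ofList gens) :
    z ∈ Ideal.ofList gens := by
  set s : Set (MvPolynomial (Fin 8) ℂ) := { r | r ∈ gens } with hs
  set J : Ideal (MvPolynomial (Fin 7) ℂ) :=
    Ideal.span ((fun q => Polynomial.coeff q 0) '' (⇑e '' s)) with hJ
  have himg : ⇑Polynomial.C '' ((fun q => Polynomial.coeff q 0) '' (⇑e '' s)) = ⇑e '' s := by
    rw [← Set.image_comp, ← Set.image_comp]
    apply Set.image_congr
    intro g hgs
    obtain ⟨h, hh⟩ := hg g hgs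
    simp [Function.comp, hh]
  have hmap : (Ideal.ofList gens).map (e : MvPolynomial (Fin 8) ℂ →+* _)
      = J.map (Polynomial.C : MvPolynomial (Fin 7) ℂ →+* _) := by
    rw [Ideal.ofList, hJ, Ideal.map_span, Ideal.map_span, himg]
    simp [hs]
  have hmem : ∀ w : MvPolynomial (Fin 8) ℂ,
      e w ∈ (Ideal.ofList gens).map (e : MvPolynomial (Fin 8) ℂ →+* _) ↔
        w ∈ Ideal.ofList gens := by
    intro w
    rw [Ideal.map_comap_of_equiv]
    simp [Ideal.mem_comap]
  have h1 : e f * e z ∈ J.map (Polynomial.C : MvPolynomial (Fin 7) ℂ →+* _) := by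
    rw [← map_mul, ← hmap]
    exact (hmem _).mpr hz
  have h2 : (Polynomial.X ^ d - Polynomial.C c) * e z
      ∈ J.map (Polynomial.C : MvPolynomial (Fin 7) ℂ →+* _) := by
    rcases hf with hf | hf
    · rwa [hf] at h1
    · rw [hf] at h1
      have := neg_mem h1
      have heq : (Polynomial.X ^ d - Polynomial.C c) * (e z)
          = -((Polynomial.C c - Polynomial.X ^ d) * (e z)) := by ring
      rw [heq]
      exact this
  have h3 := poly_step J c d hd _ h2
  rw [← hmap] at h3
  exact (hmem z).mp h3

end Stmt10Aux

open Stmt10Aux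

/-- the eight elements
`(E², F², H³, W^{3p-1}, W^p·E − x₅², W^p·F − x₆², W^p·H − x₇², H² − C_p·W^{2p-1} − x₈²)`
form a regular sequence in `ℂ[E,F,H,W,x₅,x₆,x₇,x₈]`; in particular the quotient `R̃_p` by the
ideal they generate is a complete intersection ring. -/
theorem stmt_10 (p : ℕ) (hp : 2 ≤ p) :
    RingTheory.Sequence.IsRegular (MvPolynomial (Fin 8) ℂ)
      [Evar ^ 2, Fvar ^ 2, Hvar ^ 3, Wvar ^ (3 * p - 1),
        Wvar ^ p * Evar - x5var ^ 2, Wvar ^ p * Fvar - x6var ^ 2,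
        Wvar ^ p * Hvar - x7var ^ 2,
        Hvar ^ 2 - C (Cconst p) * Wvar ^ (2 * p - 1) - x8var ^ 2] := by
  have h3p : 3 * p - 1 ≠ 0 := by omega
  have h2p : 2 * p - 1 ≠ 0 := by omega
  constructor
  · rw [RingTheory.Sequence.isWeaklyRegular_iff]
    intro i hi
    simp only [List.length_cons, List.length_nil] at hi
    interval_cases i <;>
      simp only [List.take_succ_cons, List.take_zero, List.getElem_cons_zero,
        List.getElem_cons_succ]
    · apply reg_of
      intro z hz
      refine step (ev 0) _ _ (0) (2) (two_ne_zero) ?_ ?_ z hz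
      · left
        simp [Evar, Fvar, Hvar, Wvar, x5var, x6var, x7var, x8var, ev_C, ev_X, Equiv.swap_apply_def, fse0, fse1, fse2, fse3, fse4, fse5, fse6, fse7, map_sub, map_mul, map_pow, map_zero, sub_zero, Polynomial.C_0]
      · intro g hgmem
        simp at hgmem
    · apply reg_of
      intro z hz
      refine step (ev 1) _ _ (0) (2) (two_ne_zero) ?_ ?_ z hz
      · left
        simp [Evar, Fvar, Hvar, Wvar, x5var, x6var, x7var, x8var, ev_C, ev_X, Equiv.swap_apply_def, fse0, fse1, fse2, fse3, fse4, fse5, fse6, fse7, map_sub, map_mul, map_pow, map_zero, sub_zero, Polynomial.C_0]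
      · intro g hgmem
        fin_cases hgmem
        · exact ⟨X 0 ^ 2, by simp [Evar, Fvar, Hvar, Wvar, x5var, x6var, x7var, x8var, ev_C, ev_X, Equiv.swap_apply_def, fse0, fse1, fse2, fse3, fse4, fse5, fse6, fse7, map_sub, map_mul, map_pow, map_zero, sub_zero, Polynomial.C_0]⟩
    · apply reg_of
      intro z hz
      refine step (ev 2) _ _ (0) (3) (three_ne_zero) ?_ ?_ z hz
      · left
        simp [Evar, Fvar, Hvar, Wvar, x5var, x6var, x7var, x8var, ev_C, ev_X, Equiv.swap_apply_def, fse0, fse1, fse2, fse3, fse4, fse5, fse6, fse7, map_sub, map_mul, map_pow, map_zero, sub_zero, Polynomial.C_0]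
      · intro g hgmem
        fin_cases hgmem
        · exact ⟨X 1 ^ 2, by simp [Evar, Fvar, Hvar, Wvar, x5var, x6var, x7var, x8var, ev_C, ev_X, Equiv.swap_apply_def, fse0, fse1, fse2, fse3, fse4, fse5, fse6, fse7, map_sub, map_mul, map_pow, map_zero, sub_zero, Polynomial.C_0]⟩
        · exact ⟨X 0 ^ 2, by simp [Evar, Fvar, Hvar, Wvar, x5var, x6var, x7var, x8var, ev_C, ev_X, Equiv.swap_apply_def, fse0, fse1, fse2, fse3, fse4, fse5, fse6, fse7, map_sub, map_mul, map_pow, map_zero, sub_zero, Polynomial.C_0]⟩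
    · apply reg_of
      intro z hz
      refine step (ev 3) _ _ (0) (3 * p - 1) (h3p) ?_ ?_ z hz
      · left
        simp [Evar, Fvar, Hvar, Wvar, x5var, x6var, x7var, x8var, ev_C, ev_X, Equiv.swap_apply_def, fse0, fse1, fse2, fse3, fse4, fse5, fse6, fse7, map_sub, map_mul, map_pow, map_zero, sub_zero, Polynomial.C_0]
      · intro g hgmem
        fin_cases hgmem
        · exact ⟨X 2 ^ 2, by simp [Evar, Fvar, Hvar, Wvar, x5var, x6var, x7var, x8var, ev_C, ev_X, Equiv.swap_apply_def, fse0, fse1, fse2, fse3, fse4, fse5, fse6, fse7, map_sub, map_mul, map_pow, map_zero, sub_zero, Polynomial.C_0]⟩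
        · exact ⟨X 0 ^ 2, by simp [Evar, Fvar, Hvar, Wvar, x5var, x6var, x7var, x8var, ev_C, ev_X, Equiv.swap_apply_def, fse0, fse1, fse2, fse3, fse4, fse5, fse6, fse7, map_sub, map_mul, map_pow, map_zero, sub_zero, Polynomial.C_0]⟩
        · exact ⟨X 1 ^ 3, by simp [Evar, Fvar, Hvar, Wvar, x5var, x6var, x7var, x8var, ev_C, ev_X, Equiv.swap_apply_def, fse0, fse1, fse2, fse3, fse4, fse5, fse6, fse7, map_sub, map_mul, map_pow, map_zero, sub_zero, Polynomial.C_0]⟩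
    · apply reg_of
      intro z hz
      refine step (ev 4) _ _ (X 2 ^ p * X 3) (2) (two_ne_zero) ?_ ?_ z hz
      · right
        simp [Evar, Fvar, Hvar, Wvar, x5var, x6var, x7var, x8var, ev_C, ev_X, Equiv.swap_apply_def, fse0, fse1, fse2, fse3, fse4, fse5, fse6, fse7, map_sub, map_mul, map_pow, map_zero, sub_zero, Polynomial.C_0]
      · intro g hgmem
        fin_cases hgmem
        · exact ⟨X 3 ^ 2, by simp [Evar, Fvar, Hvar, Wvar, x5var, x6var, x7var, x8var, ev_C, ev_X, Equiv.swap_apply_def, fse0, fse1, fse2, fse3, fse4, fse5, fse6, fse7, map_sub, map_mul, map_pow, map_zero, sub_zero, Polynomial.C_0]⟩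
        · exact ⟨X 0 ^ 2, by simp [Evar, Fvar, Hvar, Wvar, x5var, x6var, x7var, x8var, ev_C, ev_X, Equiv.swap_apply_def, fse0, fse1, fse2, fse3, fse4, fse5, fse6, fse7, map_sub, map_mul, map_pow, map_zero, sub_zero, Polynomial.C_0]⟩
        · exact ⟨X 1 ^ 3, by simp [Evar, Fvar, Hvar, Wvar, x5var, x6var, x7var, x8var, ev_C, ev_X, Equiv.swap_apply_def, fse0, fse1, fse2, fse3, fse4, fse5, fse6, fse7, map_sub, map_mul, map_pow, map_zero, sub_zero, Polynomial.C_0]⟩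
        · exact ⟨X 2 ^ (3 * p - 1), by simp [Evar, Fvar, Hvar, Wvar, x5var, x6var, x7var, x8var, ev_C, ev_X, Equiv.swap_apply_def, fse0, fse1, fse2, fse3, fse4, fse5, fse6, fse7, map_sub, map_mul, map_pow, map_zero, sub_zero, Polynomial.C_0]⟩
    · apply reg_of
      intro z hz
      refine step (ev 5) _ _ (X 2 ^ p * X 0) (2) (two_ne_zero) ?_ ?_ z hz
      · right
        simp [Evar, Fvar, Hvar, Wvar, x5var, x6var, x7var, x8var, ev_C, ev_X, Equiv.swap_apply_def, fse0, fse1, fse2, fse3, fse4, fse5, fse6, fse7, map_sub, map_mul, map_pow, map_zero, sub_zero, Polynomial.C_0]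
      · intro g hgmem
        fin_cases hgmem
        · exact ⟨X 4 ^ 2, by simp [Evar, Fvar, Hvar, Wvar, x5var, x6var, x7var, x8var, ev_C, ev_X, Equiv.swap_apply_def, fse0, fse1, fse2, fse3, fse4, fse5, fse6, fse7, map_sub, map_mul, map_pow, map_zero, sub_zero, Polynomial.C_0]⟩
        · exact ⟨X 0 ^ 2, by simp [Evar, Fvar, Hvar, Wvar, x5var, x6var, x7var, x8var, ev_C, ev_X, Equiv.swap_apply_def, fse0, fse1, fse2, fse3, fse4, fse5, fse6, fse7, map_sub, map_mul, map_pow, map_zero, sub_zero, Polynomial.C_0]⟩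
        · exact ⟨X 1 ^ 3, by simp [Evar, Fvar, Hvar, Wvar, x5var, x6var, x7var, x8var, ev_C, ev_X, Equiv.swap_apply_def, fse0, fse1, fse2, fse3, fse4, fse5, fse6, fse7, map_sub, map_mul, map_pow, map_zero, sub_zero, Polynomial.C_0]⟩
        · exact ⟨X 2 ^ (3 * p - 1), by simp [Evar, Fvar, Hvar, Wvar, x5var, x6var, x7var, x8var, ev_C, ev_X, Equiv.swap_apply_def, fse0, fse1, fse2, fse3, fse4, fse5, fse6, fse7, map_sub, map_mul, map_pow, map_zero, sub_zero, Polynomial.C_0]⟩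
        · exact ⟨X 2 ^ p * X 4 - X 3 ^ 2, by simp [Evar, Fvar, Hvar, Wvar, x5var, x6var, x7var, x8var, ev_C, ev_X, Equiv.swap_apply_def, fse0, fse1, fse2, fse3, fse4, fse5, fse6, fse7, map_sub, map_mul, map_pow, map_zero, sub_zero, Polynomial.C_0]⟩
    · apply reg_of
      intro z hz
      refine step (ev 6) _ _ (X 2 ^ p * X 1) (2) (two_ne_zero) ?_ ?_ z hz
      · right
        simp [Evar, Fvar, Hvar, Wvar, x5var, x6var, x7var, x8var, ev_C, ev_X, Equiv.swap_apply_def, fse0, fse1, fse2, fse3, fse4, fse5, fse6, fse7, map_sub, map_mul, map_pow, map_zero, sub_zero, Polynomial.C_0]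
      · intro g hgmem
        fin_cases hgmem
        · exact ⟨X 5 ^ 2, by simp [Evar, Fvar, Hvar, Wvar, x5var, x6var, x7var, x8var, ev_C, ev_X, Equiv.swap_apply_def, fse0, fse1, fse2, fse3, fse4, fse5, fse6, fse7, map_sub, map_mul, map_pow, map_zero, sub_zero, Polynomial.C_0]⟩
        · exact ⟨X 0 ^ 2, by simp [Evar, Fvar, Hvar, Wvar, x5var, x6var, x7var, x8var, ev_C, ev_X, Equiv.swap_apply_def, fse0, fse1, fse2, fse3, fse4, fse5, fse6, fse7, map_sub, map_mul, map_pow, map_zero, sub_zero, Polynomial.C_0]⟩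
        · exact ⟨X 1 ^ 3, by simp [Evar, Fvar, Hvar, Wvar, x5var, x6var, x7var, x8var, ev_C, ev_X, Equiv.swap_apply_def, fse0, fse1, fse2, fse3, fse4, fse5, fse6, fse7, map_sub, map_mul, map_pow, map_zero, sub_zero, Polynomial.C_0]⟩
        · exact ⟨X 2 ^ (3 * p - 1), by simp [Evar, Fvar, Hvar, Wvar, x5var, x6var, x7var, x8var, ev_C, ev_X, Equiv.swap_apply_def, fse0, fse1, fse2, fse3, fse4, fse5, fse6, fse7, map_sub, map_mul, map_pow, map_zero, sub_zero, Polynomial.C_0]⟩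
        · exact ⟨X 2 ^ p * X 5 - X 3 ^ 2, by simp [Evar, Fvar, Hvar, Wvar, x5var, x6var, x7var, x8var, ev_C, ev_X, Equiv.swap_apply_def, fse0, fse1, fse2, fse3, fse4, fse5, fse6, fse7, map_sub, map_mul, map_pow, map_zero, sub_zero, Polynomial.C_0]⟩
        · exact ⟨X 2 ^ p * X 0 - X 4 ^ 2, by simp [Evar, Fvar, Hvar, Wvar, x5var, x6var, x7var, x8var, ev_C, ev_X, Equiv.swap_apply_def, fse0, fse1, fse2, fse3, fse4, fse5, fse6, fse7, map_sub, map_mul, map_pow, map_zero, sub_zero, Polynomial.C_0]⟩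
    · apply reg_of
      intro z hz
      refine step (ev 7) _ _ (X 1 ^ 2 - MvPolynomial.C (Cconst p) * X 2 ^ (2 * p - 1)) (2) (two_ne_zero) ?_ ?_ z hz
      · right
        simp [Evar, Fvar, Hvar, Wvar, x5var, x6var, x7var, x8var, ev_C, ev_X, Equiv.swap_apply_def, fse0, fse1, fse2, fse3, fse4, fse5, fse6, fse7, map_sub, map_mul, map_pow, map_zero, sub_zero, Polynomial.C_0]
      · intro g hgmem
        fin_cases hgmem
        · exact ⟨X 6 ^ 2, by simp [Evar, Fvar, Hvar, Wvar, x5var, x6var, x7var, x8var, ev_C, ev_X, Equiv.swap_apply_def, fse0, fse1, fse2, fse3, fse4, fse5, fse6, fse7, map_sub, map_mul, map_pow, map_zero, sub_zero, Polynomial.C_0]⟩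
        · exact ⟨X 0 ^ 2, by simp [Evar, Fvar, Hvar, Wvar, x5var, x6var, x7var, x8var, ev_C, ev_X, Equiv.swap_apply_def, fse0, fse1, fse2, fse3, fse4, fse5, fse6, fse7, map_sub, map_mul, map_pow, map_zero, sub_zero, Polynomial.C_0]⟩
        · exact ⟨X 1 ^ 3, by simp [Evar, Fvar, Hvar, Wvar, x5var, x6var, x7var, x8var, ev_C, ev_X, Equiv.swap_apply_def, fse0, fse1, fse2, fse3, fse4, fse5, fse6, fse7, map_sub, map_mul, map_pow, map_zero, sub_zero, Polynomial.C_0]⟩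
        · exact ⟨X 2 ^ (3 * p - 1), by simp [Evar, Fvar, Hvar, Wvar, x5var, x6var, x7var, x8var, ev_C, ev_X, Equiv.swap_apply_def, fse0, fse1, fse2, fse3, fse4, fse5, fse6, fse7, map_sub, map_mul, map_pow, map_zero, sub_zero, Polynomial.C_0]⟩
        · exact ⟨X 2 ^ p * X 6 - X 3 ^ 2, by simp [Evar, Fvar, Hvar, Wvar, x5var, x6var, x7var, x8var, ev_C, ev_X, Equiv.swap_apply_def, fse0, fse1, fse2, fse3, fse4, fse5, fse6, fse7, map_sub, map_mul, map_pow, map_zero, sub_zero, Polynomial.C_0]⟩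
        · exact ⟨X 2 ^ p * X 0 - X 4 ^ 2, by simp [Evar, Fvar, Hvar, Wvar, x5var, x6var, x7var, x8var, ev_C, ev_X, Equiv.swap_apply_def, fse0, fse1, fse2, fse3, fse4, fse5, fse6, fse7, map_sub, map_mul, map_pow, map_zero, sub_zero, Polynomial.C_0]⟩
        · exact ⟨X 2 ^ p * X 1 - X 5 ^ 2, by simp [Evar, Fvar, Hvar, Wvar, x5var, x6var, x7var, x8var, ev_C, ev_X, Equiv.swap_apply_def, fse0, fse1, fse2, fse3, fse4, fse5, fse6, fse7, map_sub, map_mul, map_pow, map_zero, sub_zero, Polynomial.C_0]⟩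
  · rw [smul_top_eq]
    intro htop
    have h1 : (1 : MvPolynomial (Fin 8) ℂ) ∈ Ideal.ofList
        [Evar ^ 2, Fvar ^ 2, Hvar ^ 3, Wvar ^ (3 * p - 1),
          Wvar ^ p * Evar - x5var ^ 2, Wvar ^ p * Fvar - x6var ^ 2,
          Wvar ^ p * Hvar - x7var ^ 2,
          Hvar ^ 2 - C (Cconst p) * Wvar ^ (2 * p - 1) - x8var ^ 2] := by
      rw [← htop]; exact Submodule.mem_top
    have hp0 : p ≠ 0 := by omega
    have hle : Ideal.ofList
        [Evar ^ 2, Fvar ^ 2, Hvar ^ 3, Wvar ^ (3 * p - 1),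
          Wvar ^ p * Evar - x5var ^ 2, Wvar ^ p * Fvar - x6var ^ 2,
          Wvar ^ p * Hvar - x7var ^ 2,
          Hvar ^ 2 - C (Cconst p) * Wvar ^ (2 * p - 1) - x8var ^ 2]
        ≤ RingHom.ker (MvPolynomial.eval (fun _ => 0 : Fin 8 → ℂ)) := by
      rw [Ideal.span_le]
      intro g hgmem
      simp only [Set.mem_setOf_eq, List.mem_cons, List.not_mem_nil, or_false] at hgmem
      rcases hgmem with rfl | rfl | rfl | rfl | rfl | rfl | rfl | rfl <;>
        simp [RingHom.mem_ker, Evar, Fvar, Hvar, Wvar, x5var, x6var, x7var, x8var,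
          zero_pow, h3p, h2p, hp0]
    have := hle h1
    simp [RingHom.mem_ker] at this
end

section
/- Let p ≥ 2 be an integer. In the graded algebra Y_p, the homogeneous component of degree 0 has ℂ-dimension 2p, and for every n ≥ 1 the homogeneous component of degree n has ℂ-dimension 2(n+1)(p−1); equivalently, for every n ≥ 0 the sum of the dimensions of the homogeneous components of degrees 0 through n equals n(n+1)(p−1) + 2n(p−1) + 2p. -/
open FreeAlgebra

/-- Generators of the algebra `Y_p`: idempotents `e_s^±` of degree `0` (the sign `+` is
encoded by `true` and `-` by `false`) and arrows `α_{s,i}`, `β_{s,i}` of degree `1` (the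
indices `1, 2` are encoded by `0, 1 : Fin 2`). -/
inductive YGen (p : ℕ) : Type
  | e : Fin p → Bool → YGen p
  | α : Fin (p - 1) → Fin 2 → YGen p
  | β : Fin (p - 1) → Fin 2 → YGen p

/-- The inclusion `Fin (p-1) → Fin p`. -/
def finIncl {p : ℕ} (s : Fin (p - 1)) : Fin p := Fin.castLE (Nat.sub_le p 1) s

/-- The generators, as elements of the free algebra. -/
noncomputable def gE (p : ℕ) (s : Fin p) (σ : Bool) : FreeAlgebra ℂ (YGen p) :=
  ι ℂ (YGen.e s σ)

noncomputable def gAl (p : ℕ) (s : Fin (p - 1)) (i : Fin 2) : FreeAlgebra ℂ (YGen p) :=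
  ι ℂ (YGen.α s i)

noncomputable def gBe (p : ℕ) (s : Fin (p - 1)) (i : Fin 2) : FreeAlgebra ℂ (YGen p) :=
  ι ℂ (YGen.β s i)

/-- The defining relations of `Y_p`: the `e`'s are pairwise orthogonal idempotents whose sum
is `1`; `α_{s,i} = e_s⁺ α_{s,i} e_s⁻` and `β_{s,i} = e_s⁻ β_{s,i} e_s⁺` for all `s, i`; and
`α_{s,1}β_{s,2} + α_{s,2}β_{s,1} = 0`, `β_{s,1}α_{s,2} + β_{s,2}α_{s,1} = 0`. -/
inductive YRel (p : ℕ) : FreeAlgebra ℂ (YGen p) → FreeAlgebra ℂ (YGen p) → Prop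
  | orth (s t : Fin p) (σ τ : Bool) :
      YRel p (gE p s σ * gE p t τ) (if s = t ∧ σ = τ then gE p s σ else 0)
  | sum_eq_one : YRel p (∑ s : Fin p, (gE p s true + gE p s false)) 1
  | α_sandwich (s : Fin (p - 1)) (i : Fin 2) :
      YRel p (gAl p s i) (gE p (finIncl s) true * gAl p s i * gE p (finIncl s) false)
  | β_sandwich (s : Fin (p - 1)) (i : Fin 2) :
      YRel p (gBe p s i) (gE p (finIncl s) false * gBe p s i * gE p (finIncl s) true)
  | αβ (s : Fin (p - 1)) :
      YRel p (gAl p s 0 * gBe p s 1 + gAl p s 1 * gBe p s 0) 0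
  | βα (s : Fin (p - 1)) :
      YRel p (gBe p s 0 * gAl p s 1 + gBe p s 1 * gAl p s 0) 0

/-- The graded algebra `Y_p`, presented by the above generators and relations. -/
abbrev Yalg (p : ℕ) : Type := RingQuot (YRel p)

/-- The images of the generators in `Y_p`. -/
noncomputable def yE (p : ℕ) (s : Fin p) (σ : Bool) : Yalg p :=
  RingQuot.mkAlgHom ℂ (YRel p) (gE p s σ)

/-- The index set for the degree-one generators `α_{s,i}` (left) and `β_{s,i}` (right). -/
abbrev ArrIdx (p : ℕ) : Type := (Fin (p - 1) × Fin 2) ⊕ (Fin (p - 1) × Fin 2)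

/-- The degree-one generators of `Y_p`. -/
noncomputable def yArr (p : ℕ) : ArrIdx p → Yalg p
  | .inl (s, i) => RingQuot.mkAlgHom ℂ (YRel p) (gAl p s i)
  | .inr (s, i) => RingQuot.mkAlgHom ℂ (YRel p) (gBe p s i)

/-- The degree-`0` homogeneous component of `Y_p`: the `ℂ`-span of the idempotents `e_s^±`. -/
noncomputable def Ydeg0 (p : ℕ) : Submodule ℂ (Yalg p) :=
  Submodule.span ℂ (Set.range fun x : Fin p × Bool => yE p x.1 x.2)

/-- The degree-`n` homogeneous component of `Y_p` (for `n ≥ 1`): the `ℂ`-span of the products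
of exactly `n` of the degree-one generators. -/
noncomputable def Ydeg (p n : ℕ) : Submodule ℂ (Yalg p) :=
  Submodule.span ℂ
    {x : Yalg p | ∃ w : Fin n → ArrIdx p, x = (List.ofFn fun j => yArr p (w j)).prod}

/-
In degree `n ≥ 1` a product of arrows vanishes unless it is an alternating path `α β α ⋯` or
`β α β ⋯` along a single pair `e_s^±`; the anticommutation relations reorder the indices of such
a path up to sign, so the `2(n+1)(p-1)` paths whose indices read `1 ⋯ 1 2 ⋯ 2` span. They are
linearly independent because `Y_p` acts on `2p × 2p` matrices over `ℂ[x₁, x₂]`, with `α_{s,i}`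
and `β_{s,i}` acting by `± x_i` in a single entry: the sorted path starting at `e_s^σ` with `k`
indices equal to `2` goes to a multiple of `x₁^{n-k} x₂^k` in row `(s, σ)`.
-/

open MvPolynomial

noncomputable section

theorem linearIndependent_of_map_eq_smul_basis {ι κ K M V : Type*} [DivisionRing K]
    [AddCommGroup M] [Module K M] [AddCommGroup V] [Module K V] {v : ι → M}
    (φ : M →ₗ[K] V) (b : Module.Basis κ K V) {f : ι → κ} (hf : f.Injective)
    (h : ∀ i, ∃ c : K, c ≠ 0 ∧ φ (v i) = c • b (f i)) : LinearIndependent K v := by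
  choose c hc hφ using h
  refine LinearIndependent.of_comp φ ?_
  convert (b.linearIndependent.comp f hf).units_smul fun i => Units.mk0 (c i) (hc i) using 1
  ext i
  exact hφ i

namespace Yalg

variable {p : ℕ}

theorem finIncl_injective : (finIncl : Fin (p - 1) → Fin p).Injective :=
  Fin.castLE_injective (Nat.sub_le p 1)

theorem yE_mul_yE_of_ne {s t : Fin p} {σ τ : Bool} (h : ¬(s = t ∧ σ = τ)) :
    yE p s σ * yE p t τ = 0 := by
  rw [yE, yE, ← map_mul, RingQuot.mkAlgHom_rel ℂ (YRel.orth s t σ τ), if_neg h, map_zero]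

/-- `α_{s,i}` if `d = true`, `β_{s,i}` if `d = false`: the arrow `e_s^d ⟶ e_s^{!d}`. -/
def arrIdx (d : Bool) (s : Fin (p - 1)) (i : Fin 2) : ArrIdx p :=
  cond d (.inl (s, i)) (.inr (s, i))

theorem arrIdx_surjective (x : ArrIdx p) : ∃ d s i, arrIdx d s i = x := by
  rcases x with ⟨s, i⟩ | ⟨s, i⟩
  exacts [⟨true, s, i, rfl⟩, ⟨false, s, i, rfl⟩]

def arr (d : Bool) (s : Fin (p - 1)) (i : Fin 2) : Yalg p := yArr p (arrIdx d s i)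

theorem yArr_arrIdx (d : Bool) (s : Fin (p - 1)) (i : Fin 2) :
    yArr p (arrIdx d s i) = arr d s i := rfl

theorem yE_mul_arr_mul_yE (d : Bool) (s : Fin (p - 1)) (i : Fin 2) :
    yE p (finIncl s) d * arr d s i * yE p (finIncl s) (!d) = arr d s i := by
  cases d <;> simp only [arr, arrIdx, cond, yArr, yE, ← map_mul, Bool.not_true, Bool.not_false]
  exacts [(RingQuot.mkAlgHom_rel ℂ (YRel.β_sandwich s i)).symm,
    (RingQuot.mkAlgHom_rel ℂ (YRel.α_sandwich s i)).symm]

theorem arr_mul_arr_of_ne {d e : Bool} {s t : Fin (p - 1)} (h : ¬(t = s ∧ e = !d))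
    (i j : Fin 2) : arr d t i * arr e s j = 0 := by
  have hE : yE p (finIncl t) (!d) * yE p (finIncl s) e = 0 :=
    yE_mul_yE_of_ne fun ⟨hts, hde⟩ => h ⟨finIncl_injective hts, by simp [hde]⟩
  rw [← yE_mul_arr_mul_yE d t i, ← yE_mul_arr_mul_yE e s j]
  simp only [mul_assoc]
  rw [← mul_assoc (yE p _ (!d)), hE, zero_mul, mul_zero, mul_zero]

-- Stated with `(-1 : ℂ) •` rather than `-`: `rw` and `simp` do not see through the negation
-- instance of `RingQuot`.
theorem arr_one_mul_arr_zero (d : Bool) (s : Fin (p - 1)) :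
    arr d s 1 * arr (!d) s 0 = (-1 : ℂ) • (arr d s 0 * arr (!d) s 1) := by
  refine (eq_neg_of_add_eq_zero_right ?_).trans (neg_one_smul ℂ _).symm
  cases d <;> simp only [arr, arrIdx, cond, yArr, Bool.not_true, Bool.not_false, ← map_mul,
    ← map_add]
  exacts [by rw [RingQuot.mkAlgHom_rel ℂ (YRel.βα s), map_zero],
    by rw [RingQuot.mkAlgHom_rel ℂ (YRel.αβ s), map_zero]]

def path (s : Fin (p - 1)) : Bool → List (Fin 2) → List (ArrIdx p)
  | _, [] => []
  | d, i :: l => arrIdx d s i :: path s (!d) l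

def word (s : Fin (p - 1)) (d : Bool) (l : List (Fin 2)) : Yalg p :=
  ((path s d l).map (yArr p)).prod

@[simp]
theorem word_nil (s : Fin (p - 1)) (d : Bool) : word s d [] = 1 := rfl

@[simp]
theorem word_cons (s : Fin (p - 1)) (d : Bool) (i : Fin 2) (l : List (Fin 2)) :
    word s d (i :: l) = arr d s i * word s (!d) l := rfl

theorem length_path (s : Fin (p - 1)) (d : Bool) (l : List (Fin 2)) :
    (path s d l).length = l.length := by
  induction l generalizing d <;> simp [path, *]

theorem list_prod_mem_Ydeg (L : List (ArrIdx p)) : (L.map (yArr p)).prod ∈ Ydeg p L.length :=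
  Submodule.subset_span
    ⟨fun j => L[j], congrArg List.prod (List.ofFn_getElem_eq_map L (yArr p)).symm⟩

theorem word_mem_Ydeg (s : Fin (p - 1)) (d : Bool) (l : List (Fin 2)) :
    word s d l ∈ Ydeg p l.length :=
  length_path s d l ▸ list_prod_mem_Ydeg _

theorem word_one_zero (s : Fin (p - 1)) (d : Bool) (l : List (Fin 2)) :
    word s d (1 :: 0 :: l) = (-1 : ℂ) • word s d (0 :: 1 :: l) := by
  rw [word_cons, word_cons, word_cons, word_cons, ← mul_assoc, arr_one_mul_arr_zero,
    smul_mul_assoc, mul_assoc]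

theorem word_swap (s : Fin (p - 1)) (d : Bool) (x y : Fin 2) (l : List (Fin 2)) :
    ∃ c : ℂ, word s d (x :: y :: l) = c • word s d (y :: x :: l) := by
  by_cases hxy : x = y
  · exact ⟨1, by rw [hxy, one_smul]⟩
  obtain ⟨rfl, rfl⟩ | ⟨rfl, rfl⟩ : (x = 1 ∧ y = 0) ∨ (x = 0 ∧ y = 1) := by omega
  · exact ⟨-1, word_one_zero s d l⟩
  · exact ⟨-1, by rw [word_one_zero, smul_smul, neg_one_mul, neg_neg, one_smul]⟩

theorem word_perm (s : Fin (p - 1)) {l₁ l₂ : List (Fin 2)} (h : l₁.Perm l₂) (d : Bool) :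
    ∃ c : ℂ, word s d l₁ = c • word s d l₂ := by
  induction h generalizing d with
  | nil => exact ⟨1, (one_smul ℂ _).symm⟩
  | cons x _ ih =>
    obtain ⟨c, hc⟩ := ih (!d)
    exact ⟨c, by rw [word_cons, word_cons, hc, mul_smul_comm]⟩
  | swap x y l => exact word_swap s d y x l
  | trans _ _ ih₁ ih₂ =>
    obtain ⟨c₁, h₁⟩ := ih₁ d
    obtain ⟨c₂, h₂⟩ := ih₂ d
    exact ⟨c₁ * c₂, by rw [h₁, h₂, smul_smul]⟩

variable (p) in
def sortedWord (n : ℕ) (x : Fin (p - 1) × Bool × Fin (n + 1)) : Yalg p :=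
  word x.1 x.2.1 (List.replicate (n - x.2.2) 0 ++ List.replicate x.2.2 1)

theorem word_mem_span_sortedWord (s : Fin (p - 1)) (d : Bool) (l : List (Fin 2)) :
    word s d l ∈ Submodule.span ℂ (Set.range (sortedWord p l.length)) := by
  have hperm : l.Perm (List.replicate (l.count 0) 0 ++ List.replicate (l.count 1) 1) :=
    (List.perm_replicate_append_replicate (by decide)).2
      ⟨rfl, rfl, fun x _ => by fin_cases x <;> simp⟩
  have hlen := hperm.length_eq
  simp only [List.length_append, List.length_replicate] at hlen
  obtain ⟨c, hc⟩ := word_perm s hperm d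
  rw [hc]
  refine Submodule.smul_mem _ c (Submodule.subset_span ⟨(s, d, ⟨l.count 1, by omega⟩), ?_⟩)
  simp only [sortedWord, show l.length - l.count 1 = l.count 0 by omega]

theorem list_prod_eq_zero_or_word (hp : 2 ≤ p) (L : List (ArrIdx p)) :
    (L.map (yArr p)).prod = 0 ∨
      ∃ s d l, l.length = L.length ∧ (L.map (yArr p)).prod = word s d l := by
  induction L with
  | nil => exact .inr ⟨⟨0, by omega⟩, true, [], rfl, rfl⟩
  | cons x L ih =>
    obtain ⟨e, t, i, rfl⟩ := arrIdx_surjective x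
    rw [List.map_cons, List.prod_cons, List.length_cons, yArr_arrIdx]
    rcases ih with h0 | ⟨s, d, l, hl, hw⟩
    · exact .inl (by rw [h0, mul_zero])
    rw [hw]
    rcases l with _ | ⟨j, l⟩
    · exact .inr ⟨t, e, [i], by simp [← hl], by simp [arr]⟩
    by_cases hts : t = s ∧ d = !e
    · obtain ⟨rfl, rfl⟩ := hts
      exact .inr ⟨t, e, i :: j :: l, by simp [← hl], rfl⟩
    · exact .inl (by rw [word_cons, ← mul_assoc, arr_mul_arr_of_ne hts, zero_mul])

theorem Ydeg_eq_span_sortedWord (hp : 2 ≤ p) (n : ℕ) :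
    Ydeg p n = Submodule.span ℂ (Set.range (sortedWord p n)) := by
  apply le_antisymm
  · rw [Ydeg, Submodule.span_le]
    rintro _ ⟨w, rfl⟩
    rw [List.ofFn_comp']
    rcases list_prod_eq_zero_or_word hp (List.ofFn w) with h0 | ⟨s, d, l, hl, hw⟩
    · rw [h0]
      exact Submodule.zero_mem _
    · rw [hw, ← List.length_ofFn (f := w), ← hl]
      exact word_mem_span_sortedWord s d l
  · rw [Submodule.span_le]
    rintro _ ⟨x, rfl⟩
    have hmem := word_mem_Ydeg x.1 x.2.1 (List.replicate (n - x.2.2) 0 ++ List.replicate x.2.2 1)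
    rwa [List.length_append, List.length_replicate, List.length_replicate,
      Nat.sub_add_cancel (Nat.le_of_lt_succ x.2.2.isLt)] at hmem

abbrev PolyMat (p : ℕ) : Type := Matrix (Fin p × Bool) (Fin p × Bool) (MvPolynomial (Fin 2) ℂ)

/-- The sign on `β_{s,2}` makes both anticommutation relations hold in this commutative model. -/
def matrixRepGen : YGen p → PolyMat p
  | .e s σ => Matrix.single (s, σ) (s, σ) 1
  | .α s i => Matrix.single (finIncl s, true) (finIncl s, false) (X i)
  | .β s i => Matrix.single (finIncl s, false) (finIncl s, true) ((-1 : ℂ) ^ (i : ℕ) • X i)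

theorem lift_matrixRepGen_rel {x y : FreeAlgebra ℂ (YGen p)} (h : YRel p x y) :
    FreeAlgebra.lift ℂ matrixRepGen x = FreeAlgebra.lift ℂ matrixRepGen y := by
  induction h with
  | orth s t σ τ =>
    by_cases hst : s = t ∧ σ = τ
    · obtain ⟨rfl, rfl⟩ := hst
      simp [gE, matrixRepGen]
    · simp only [gE, map_mul, lift_ι_apply, matrixRepGen, if_neg hst, map_zero]
      exact Matrix.single_mul_single_of_ne (h := fun h => hst (Prod.ext_iff.1 h)) ..
  | sum_eq_one =>
    simp only [gE, map_sum, map_add, lift_ι_apply, matrixRepGen, map_one, ← Matrix.sum_single_one,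
      Fintype.sum_prod_type, Fintype.sum_bool]
  | α_sandwich s i => simp [gE, gAl, matrixRepGen]
  | β_sandwich s i => simp [gE, gBe, matrixRepGen]
  | αβ s => simp [gAl, gBe, matrixRepGen, ← Matrix.single_add, mul_comm]
  | βα s => simp [gAl, gBe, matrixRepGen, ← Matrix.single_add, mul_comm]

def matrixRep (p : ℕ) : Yalg p →ₐ[ℂ] PolyMat p :=
  RingQuot.liftAlgHom ℂ ⟨FreeAlgebra.lift ℂ matrixRepGen, fun _ _ => lift_matrixRepGen_rel⟩

theorem matrixRep_yE (s : Fin p) (σ : Bool) :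
    matrixRep p (yE p s σ) = Matrix.single (s, σ) (s, σ) 1 := by
  simp [matrixRep, yE, gE, matrixRepGen]

theorem matrixRep_arr (d : Bool) (s : Fin (p - 1)) (i : Fin 2) :
    ∃ c : ℂ, c ≠ 0 ∧
      matrixRep p (arr d s i) = c • Matrix.single (finIncl s, d) (finIncl s, !d) (X i) := by
  cases d
  · exact ⟨(-1) ^ (i : ℕ), by simp, by simp [matrixRep, arr, arrIdx, yArr, gBe, matrixRepGen]⟩
  · exact ⟨1, one_ne_zero, by simp [matrixRep, arr, arrIdx, yArr, gAl, matrixRepGen]⟩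

theorem matrixRep_word (s : Fin (p - 1)) (d : Bool) {l : List (Fin 2)} (hl : l ≠ []) :
    ∃ c : ℂ, c ≠ 0 ∧ matrixRep p (word s d l) =
      c • Matrix.single (finIncl s, d) (finIncl s, (!·)^[l.length] d) (l.map X).prod := by
  induction l generalizing d with
  | nil => exact absurd rfl hl
  | cons i l ih =>
    obtain ⟨c, hc, hi⟩ := matrixRep_arr d s i
    rcases eq_or_ne l [] with rfl | hl'
    · exact ⟨c, hc, by simp [hi]⟩
    obtain ⟨c', hc', hw⟩ := ih (!d) hl'
    refine ⟨c * c', mul_ne_zero hc hc', ?_⟩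
    rw [word_cons, map_mul, hi, hw, smul_mul_smul, Matrix.single_mul_single_same, List.length_cons,
      Function.iterate_succ_apply, List.map_cons, List.prod_cons]

theorem matrixRep_sortedWord {n : ℕ} (hn : 1 ≤ n) (x : Fin (p - 1) × Bool × Fin (n + 1)) :
    ∃ c : ℂ, c ≠ 0 ∧ matrixRep p (sortedWord p n x) = c • Matrix.single (finIncl x.1, x.2.1)
      (finIncl x.1, (!·)^[n] x.2.1) (monomial (Finsupp.single 0 (n - x.2.2) +
        Finsupp.single 1 (x.2.2 : ℕ)) 1) := by
  have hk : (x.2.2 : ℕ) ≤ n := Nat.le_of_lt_succ x.2.2.isLt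
  have hlen : (List.replicate (n - x.2.2) (0 : Fin 2) ++ List.replicate x.2.2 1).length = n := by
    simp only [List.length_append, List.length_replicate]
    omega
  obtain ⟨c, hc, hw⟩ := matrixRep_word x.1 x.2.1 (List.ne_nil_of_length_pos (hlen ▸ hn))
  refine ⟨c, hc, ?_⟩
  rw [sortedWord, hw, hlen]
  simp [X_pow_eq_monomial, monomial_mul]

variable (p) in
def polyMatBasis :
    Module.Basis ((Fin p × Bool) × (Fin p × Bool) × (Fin 2 →₀ ℕ)) ℂ (PolyMat p) :=
  (basisMonomials (Fin 2) ℂ).matrix _ _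

theorem polyMatBasis_apply (r c : Fin p × Bool) (m : Fin 2 →₀ ℕ) :
    polyMatBasis p (r, c, m) = Matrix.single r c (monomial m 1) := by
  simp [polyMatBasis]

theorem linearIndependent_yE : LinearIndependent ℂ fun x : Fin p × Bool => yE p x.1 x.2 :=
  linearIndependent_of_map_eq_smul_basis (matrixRep p).toLinearMap (polyMatBasis p)
    (f := fun x => (x, x, 0)) (fun _ _ h => congrArg Prod.fst h)
    fun x => ⟨1, one_ne_zero, by simp [polyMatBasis_apply, matrixRep_yE]⟩

theorem linearIndependent_sortedWord {n : ℕ} (hn : 1 ≤ n) :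
    LinearIndependent ℂ (sortedWord p n) := by
  refine linearIndependent_of_map_eq_smul_basis (matrixRep p).toLinearMap (polyMatBasis p)
    (f := fun x => ((finIncl x.1, x.2.1), (finIncl x.1, (!·)^[n] x.2.1),
      Finsupp.single 0 (n - x.2.2) + Finsupp.single 1 (x.2.2 : ℕ))) ?_
    fun x => by
      simpa only [polyMatBasis_apply, AlgHom.toLinearMap_apply] using matrixRep_sortedWord hn x
  rintro ⟨s, d, k⟩ ⟨s', d', k'⟩ h
  simp only [Prod.mk.injEq] at h
  obtain ⟨⟨hs, rfl⟩, -, hm⟩ := h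
  have hk : (k : ℕ) = k' := by simpa using congrArg (· 1) hm
  rw [finIncl_injective hs, Fin.ext hk]

end Yalg

end

/-- in the graded algebra `Y_p`, the homogeneous component of degree `0` has
`ℂ`-dimension `2p`, and for every `n ≥ 1` the homogeneous component of degree `n` has
`ℂ`-dimension `2(n+1)(p−1)`. -/
theorem stmt_14 (p : ℕ) (hp : 2 ≤ p) :
    Module.finrank ℂ ↥(Ydeg0 p) = 2 * p ∧
    ∀ n : ℕ, 1 ≤ n → Module.finrank ℂ ↥(Ydeg p n) = 2 * (n + 1) * (p - 1) := by
  constructor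
  · rw [Ydeg0, finrank_span_eq_card Yalg.linearIndependent_yE, Fintype.card_prod,
      Fintype.card_fin, Fintype.card_bool, mul_comm]
  · intro n hn
    rw [Yalg.Ydeg_eq_span_sortedWord hp,
      finrank_span_eq_card (Yalg.linearIndependent_sortedWord hn)]
    simp only [Fintype.card_prod, Fintype.card_fin, Fintype.card_bool]
    ring
end
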